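/- arXiv:1212.1368 — 2 statements merged into one kernel-verified Lean document; each statement's English description precedes it below -/
import Mathlib

section
/- For all integers i ≥ 0 and n ≥ 2, applying the morphism φ_i to the n-th finite Fibonacci word yields the (n-1, i+2)-Fibonacci word: φ_i(f_n) = f_{n-1}^[i+2]. -/
/-- Finite Fibonacci words over {0,1}: f_0 = 1, f_1 = 0, f_n = f_{n-1} f_{n-2}. -/
def fibWord : ℕ → List ℕ
  | 0 => [1]
  | 1 => [0]
  | n + 2 => fibWord (n + 1) ++ fibWord n

/-- The (n,i)-Fibonacci words: f_0^[i] = 0, f_1^[i] = 0^{i-1} 1, f_n^[i] = f_{n-1}^[i] f_{n-2}^[i]. -/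
def genFibWord (i : ℕ) : ℕ → List ℕ
  | 0 => [0]
  | 1 => List.replicate (i - 1) 0 ++ [1]
  | n + 2 => genFibWord i (n + 1) ++ genFibWord i n

/-- The morphism φ_i with φ_i(0) = 0 and φ_i(1) = 0^i 1, extended to words. -/
def phi (i : ℕ) (w : List ℕ) : List ℕ :=
  w.flatMap (fun a => if a = 1 then List.replicate i 0 ++ [1] else [0])

lemma phi_append (i : ℕ) (a b : List ℕ) : phi i (a ++ b) = phi i a ++ phi i b := by
  simp [phi]

theorem stmt_1 (i : ℕ) (n : ℕ) (hn : 2 ≤ n) :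
    phi i (fibWord n) = genFibWord (i + 2) (n - 1) := by
  induction n using Nat.strong_induction_on with
  | _ n ih =>
    match n, hn with
    | 2, _ =>
      show phi i (fibWord 1 ++ fibWord 0) = genFibWord (i+2) 1
      simp [phi, fibWord, genFibWord, List.replicate_succ]
    | 3, _ =>
      show phi i (fibWord 2 ++ fibWord 1) = genFibWord (i+2) 1 ++ genFibWord (i+2) 0
      rw [phi_append, ih 2 (by omega) (by omega)]
      simp [phi, fibWord, genFibWord]
    | (m+4), _ =>
      show phi i (fibWord (m+3) ++ fibWord (m+2)) = genFibWord (i+2) (m+2) ++ genFibWord (i+2) (m+1)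
      rw [phi_append, ih (m+3) (by omega) (by omega), ih (m+2) (by omega) (by omega)]
      norm_num
end

section
/- Let i be even. For all n ≥ 0, q_{3n+1}^[i] = r·σ_n, q_{3n+2}^[i] = m·bar(σ_n), and q_{3n+3}^[i] = p·bar(σ_n), where r and m are palindromes, p is an antipalindrome, σ_n = 1 if n is even and σ_n = 3 if n is odd. -/
/-- The letter morphism bar: 0↦0, 1↦3, 2↦2, 3↦1. -/
def bar (a : ℕ) : ℕ := if a = 1 then 3 else if a = 3 then 1 else a

/-- The words q_n^[i] for even i. -/
def qEven (i : ℕ) : ℕ → List ℕ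
  | 0 => []
  | 1 => [1]
  | 2 => (List.replicate (i / 2) [1, 3]).flatten
  | n + 3 =>
      if (n + 3) % 3 = 1 then qEven i (n + 2) ++ qEven i (n + 1)
      else qEven i (n + 2) ++ (qEven i (n + 1)).map bar

/-- σ_n = 1 if n is even, 3 if n is odd. -/
def sigma (n : ℕ) : ℕ := if Even n then 1 else 3

lemma bar_bar (a : ℕ) : bar (bar a) = a := by unfold bar; split_ifs <;> omega

lemma map_bar_bar (w : List ℕ) : (w.map bar).map bar = w := by
  simp [List.map_map, Function.comp_def, bar_bar]

lemma map_comp_bar_bar (w : List ℕ) : w.map (bar ∘ bar) = w := by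
  simp [Function.comp_def, bar_bar]

lemma sigma_succ (n : ℕ) : sigma (n + 1) = bar (sigma n) := by
  by_cases h : Even n <;> simp [sigma, Nat.even_add_one, h, bar]

lemma qEven_add_three (i n : ℕ) : qEven i (n + 3) =
    if (n + 3) % 3 = 1 then qEven i (n + 2) ++ qEven i (n + 1)
    else qEven i (n + 2) ++ (qEven i (n + 1)).map bar := rfl

/-- Base palindrome: for every `k`, `(13)^{k+1} = m ++ [3]` with `m` a palindrome
satisfying the exchange relation. -/
lemma base (k : ℕ) : ∃ m : List ℕ, m.reverse = m ∧ m.map bar ++ [1] = [3] ++ m ∧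
    (List.replicate (k + 1) [1, 3]).flatten = m ++ [3] := by
  induction k with
  | zero => exact ⟨[1], by decide, by decide, by decide⟩
  | succ k ih =>
    obtain ⟨m, hm, hK, hA⟩ := ih
    have h2 : m ++ [3] = [1] ++ m.map bar := by
      have := congrArg (List.map bar) hK
      simpa [map_bar_bar, map_comp_bar_bar, bar] using this
    refine ⟨1 :: 3 :: m, ?_, ?_, ?_⟩
    · calc (1 :: 3 :: m).reverse = (m ++ [3]) ++ [1] := by simp [hm]
        _ = [1] ++ (m.map bar ++ [1]) := by rw [h2]; simp
        _ = 1 :: 3 :: m := by rw [hK]; simp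
    · calc (1 :: 3 :: m).map bar ++ [1] = [3, 1] ++ (m.map bar ++ [1]) := by simp [bar]
        _ = [3] ++ (1 :: 3 :: m) := by rw [hK]; simp
    · rw [List.replicate_succ, List.flatten_cons, hA]; simp

/-- The inductive step on the triple of words. -/
lemma step (s t : ℕ) (hts : bar t = s) (r m : List ℕ)
    (hr : r.reverse = r) (hm : m.reverse = m)
    (hK : r.map bar ++ [t] ++ m = m.map bar ++ [s] ++ r) :
    ∃ r' m' : List ℕ,
      r' = (m ++ [t] ++ r.map bar) ++ [t] ++ m ∧
      m' = r' ++ [t] ++ (m ++ [t] ++ r.map bar).map bar ∧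
      r'.reverse = r' ∧ m'.reverse = m' ∧
      r'.map bar ++ [s] ++ m' = m'.map bar ++ [t] ++ r' := by
  have hst : bar s = t := by rw [← hts, bar_bar]
  set br := r.map bar with hbr
  set bm := m.map bar with hbm
  set p := m ++ [t] ++ br with hp
  have hbrrev : br.reverse = br := by
    rw [hbr, ← List.map_reverse, hr]
  have hbmrev : bm.reverse = bm := by
    rw [hbm, ← List.map_reverse, hm]
  simp only [List.append_assoc, List.singleton_append] at hK
  -- hK : br ++ t :: m = bm ++ s :: r
  have hpb : p.map bar = bm ++ s :: r := by
    simp [hp, hbr, hbm, map_bar_bar, map_comp_bar_bar, bar_bar, hts]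
  have hprev : p.reverse = bm ++ s :: r := by
    rw [← hK]
    simp [hp, hbrrev, hm]
  have hbprev : (p.map bar).reverse = p := by
    rw [← List.map_reverse, hprev]
    simp [hp, hbm, hbr, map_bar_bar, map_comp_bar_bar, bar_bar, hst]
  have hL : m ++ (t :: (p.map bar)) = p ++ (t :: m) := by
    rw [hpb, ← hK]
    simp [hp]
  refine ⟨p ++ [t] ++ m, (p ++ [t] ++ m) ++ [t] ++ p.map bar, rfl, rfl, ?_, ?_, ?_⟩
  · -- r' palindrome
    have : (p ++ [t] ++ m).reverse = m ++ (t :: p.reverse) := by simp [hm]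
    rw [this, hprev, ← hK]
    simp [hp]
  · -- m' palindrome
    have : ((p ++ [t] ++ m) ++ [t] ++ p.map bar).reverse
        = p ++ (t :: (m ++ (t :: p.reverse))) := by simp [hm, hbprev]
    rw [this, hprev, ← hpb, hL]
    simp
    exact hL.symm
  · -- exchange relation for r', m'
    have h1 : (p ++ [t] ++ m).map bar = p.map bar ++ (s :: bm) := by
      simp [hbm, hts, map_comp_bar_bar, bar_bar, hst]
    have h2 : ((p ++ [t] ++ m) ++ [t] ++ p.map bar).map bar
        = (p.map bar ++ (s :: bm)) ++ (s :: p) := by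
      simp [hbm, hbr, hts, hst, map_bar_bar, map_comp_bar_bar, bar_bar, hp]
    rw [h1, h2]
    have key : (p ++ [t] ++ m) ++ (t :: p.map bar) = p ++ (t :: (p ++ (t :: m))) := by
      calc (p ++ [t] ++ m) ++ (t :: p.map bar) = p ++ (t :: (m ++ (t :: p.map bar))) := by
            simp
        _ = p ++ (t :: (p ++ (t :: m))) := by rw [hL]
    calc (p.map bar ++ (s :: bm)) ++ [s] ++ ((p ++ [t] ++ m) ++ [t] ++ p.map bar)
        = p.map bar ++ (s :: (bm ++ (s :: ((p ++ [t] ++ m) ++ (t :: p.map bar))))) := by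
          simp
      _ = p.map bar ++ (s :: (bm ++ (s :: (p ++ (t :: (p ++ (t :: m))))))) := by rw [key]
      _ = (p.map bar ++ (s :: bm)) ++ (s :: p) ++ [t] ++ (p ++ [t] ++ m) := by simp

/-- The strengthened statement, proved by induction on `n`. -/
lemma key_lemma (k i : ℕ) (hik : i = 2 * (k + 1)) (n : ℕ) :
    ∃ r m : List ℕ, r.reverse = r ∧ m.reverse = m ∧
      r.map bar ++ [bar (sigma n)] ++ m = m.map bar ++ [sigma n] ++ r ∧
      qEven i (3 * n + 1) = r ++ [sigma n] ∧
      qEven i (3 * n + 2) = m ++ [bar (sigma n)] ∧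
      qEven i (3 * n + 3) = (m ++ [bar (sigma n)] ++ r.map bar) ++ [bar (sigma n)] := by
  have hs0 : sigma 0 = 1 := by simp [sigma]
  induction n with
  | zero =>
    obtain ⟨m, hm, hK, hA⟩ := base k
    have hq2 : qEven i 2 = m ++ [3] := by
      have hdiv : i / 2 = k + 1 := by omega
      show (List.replicate (i / 2) [1, 3]).flatten = m ++ [3]
      rw [hdiv, hA]
    have hq3 : qEven i 3 = qEven i 2 ++ (qEven i 1).map bar := by
      rw [show (3 : ℕ) = 0 + 3 by rfl, qEven_add_three]
      norm_num
    refine ⟨[], m, by simp, hm, ?_, ?_, ?_, ?_⟩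
    · simpa [hs0, bar] using hK.symm
    · simp [hs0, qEven]
    · simpa [hs0, bar] using hq2
    · rw [show 3 * 0 + 3 = 3 by rfl, hq3, hq2]
      simp [hs0, bar, qEven]
  | succ n ih =>
    obtain ⟨r, m, hr, hm, hK, hq1, hq2, hq3⟩ := ih
    have hst : sigma (n + 1) = bar (sigma n) := sigma_succ n
    have hts : bar (sigma (n + 1)) = sigma n := by rw [hst, bar_bar]
    obtain ⟨r', m', hr'def, hm'def, hr'rev, hm'rev, hK'⟩ :=
      step (sigma n) (bar (sigma n)) (bar_bar _) r m hr hm hK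
    -- unfoldings of qEven
    have e4 : qEven i (3 * (n + 1) + 1) = qEven i (3 * n + 3) ++ qEven i (3 * n + 2) := by
      rw [show 3 * (n + 1) + 1 = (3 * n + 1) + 3 by ring, qEven_add_three,
        if_pos (by omega), show 3 * n + 1 + 2 = 3 * n + 3 by ring,
        show 3 * n + 1 + 1 = 3 * n + 2 by ring]
    have e5 : qEven i (3 * (n + 1) + 2) = qEven i (3 * (n + 1) + 1)
        ++ (qEven i (3 * n + 3)).map bar := by
      rw [show 3 * (n + 1) + 2 = (3 * n + 2) + 3 by ring, qEven_add_three,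
        if_neg (by omega), show 3 * n + 2 + 2 = 3 * (n + 1) + 1 by ring,
        show 3 * n + 2 + 1 = 3 * n + 3 by ring]
    have e6 : qEven i (3 * (n + 1) + 3) = qEven i (3 * (n + 1) + 2)
        ++ (qEven i (3 * (n + 1) + 1)).map bar := by
      rw [show 3 * (n + 1) + 3 = (3 * n + 3) + 3 by ring, qEven_add_three,
        if_neg (by omega), show 3 * n + 3 + 2 = 3 * (n + 1) + 2 by ring,
        show 3 * n + 3 + 1 = 3 * (n + 1) + 1 by ring]
    have hQ1 : qEven i (3 * (n + 1) + 1) = r' ++ [sigma (n + 1)] := by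
      rw [e4, hq3, hq2, hr'def, hst]
      simp
    have hQ2 : qEven i (3 * (n + 1) + 2) = m' ++ [bar (sigma (n + 1))] := by
      rw [e5, hQ1, hq3, hm'def, hts, hst]
      simp [hts, hst, bar_bar]
    refine ⟨r', m', hr'rev, hm'rev, ?_, hQ1, hQ2, ?_⟩
    · rw [hst, bar_bar]
      exact hK'
    · rw [e6, hQ2, hQ1, hts]
      simp [hts]

theorem stmt_13 (i : ℕ) (hi : Even i) (hpos : 0 < i) (n : ℕ) :
    ∃ r m p : List ℕ,
      r.reverse = r ∧ m.reverse = m ∧ p.map bar = p.reverse ∧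
      qEven i (3 * n + 1) = r ++ [sigma n] ∧
      qEven i (3 * n + 2) = m ++ [bar (sigma n)] ∧
      qEven i (3 * n + 3) = p ++ [bar (sigma n)] := by
  obtain ⟨j, hj⟩ := hi
  have hik : i = 2 * ((j - 1) + 1) := by omega
  obtain ⟨r, m, hr, hm, hK, hq1, hq2, hq3⟩ := key_lemma (j - 1) i hik n
  refine ⟨r, m, m ++ [bar (sigma n)] ++ r.map bar, hr, hm, ?_, hq1, hq2, hq3⟩
  have h1 : (m ++ [bar (sigma n)] ++ r.map bar).map bar
      = m.map bar ++ [sigma n] ++ r := by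
    simp [map_bar_bar, map_comp_bar_bar, bar_bar]
  have hbrrev : (r.map bar).reverse = r.map bar := by
    rw [← List.map_reverse, hr]
  have h2 : (m ++ [bar (sigma n)] ++ r.map bar).reverse
      = r.map bar ++ [bar (sigma n)] ++ m := by
    simp [hm, hbrrev]
  rw [h1, h2, hK]
end
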